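/- arXiv:1406.7339 — 2 statements merged into one kernel-verified Lean document; each statement's English description precedes it below -/
import Mathlib

section
/- Let T = {τ_1, …, τ_m} be an (m, β) row paving of A_=. For x ∈ ℝ^d and τ ∈ T, let x_τ denote the orthogonal projection of x onto the affine subspace {y : A_τ y = b_τ} (which is nonempty since S is nonempty). Then the average over the paving satisfies (1/m)·Σ_{τ∈T} d(x_τ, S)² ≤ d(x, S)² − (1/(βm))·‖A_= x − b_=‖², where b_= is the subvector of b indexed by I_=. -/
/-!
Let `z` be a point of `S` nearest to `x`. It satisfies the equations of every block, so it lies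
in the affine set onto which `x_τ` is the orthogonal projection, and Pythagoras gives
`‖x - z‖² = ‖x - x_τ‖² + ‖z - x_τ‖²`. Here `d(x_τ, S)² ≤ ‖z - x_τ‖²`, while the block residuals
of `x` are those of `x - x_τ`, so the paving bound gives `‖A_τ x - b_τ‖² ≤ β ‖x - x_τ‖²`.
Summing over the blocks, which partition `I_=`, and dividing by `m` gives the claim.
-/

open scoped RealInnerProductSpace BigOperators

noncomputable section

/-- An `(m, β)` row paving of the rows of `a` indexed by `I`: a partition of `I` into `m`
nonempty blocks `T 0, …, T (m-1)` such that for each block `τ`, the row submatrix `A_τ` with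
rows `(a i)_{i ∈ τ}` satisfies `λ_max(A_τ A_τ*) ≤ β`, stated equivalently as the quadratic
bound `‖A_τ x‖² = ∑_{i ∈ τ} ⟪a i, x⟫² ≤ β ‖x‖²` for all `x`. -/
def IsRowPaving {n d : ℕ} (a : Fin n → EuclideanSpace ℝ (Fin d)) (I : Finset (Fin n))
    (m : ℕ) (β : ℝ) (T : Fin m → Finset (Fin n)) : Prop :=
  (∀ k, (T k).Nonempty) ∧
  (∀ k l, k ≠ l → Disjoint (T k) (T l)) ∧
  (Finset.univ.biUnion T = I) ∧
  (∀ k, ∀ x : EuclideanSpace ℝ (Fin d), ∑ i ∈ T k, ⟪a i, x⟫ ^ 2 ≤ β * ‖x‖ ^ 2)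

theorem div_le_of_le_mul_of_nonneg {s t β : ℝ} (hs : 0 ≤ s) (ht : 0 ≤ t) (h : s ≤ β * t) :
    s / β ≤ t := by
  rcases le_or_gt β 0 with hβ | hβ
  · exact (div_nonpos_of_nonneg_of_nonpos hs hβ).trans ht
  · exact div_le_of_le_mul₀ hβ.le ht (by rwa [mul_comm])

section InnerProductSpace

variable {E : Type*} [NormedAddCommGroup E] [InnerProductSpace ℝ E]

theorem real_inner_eq_zero_of_forall_norm_le_norm_sub_smul {u v : E}
    (h : ∀ t : ℝ, ‖u‖ ≤ ‖u - t • v‖) : ⟪u, v⟫ = 0 := by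
  rcases eq_or_ne v 0 with rfl | hv
  · exact inner_zero_right u
  have hv2 : 0 < ‖v‖ ^ 2 := by positivity
  -- the minimizing `t`, at which `‖u - t • v‖² = ‖u‖² - ⟪u, v⟫² / ‖v‖²`
  set t := ⟪u, v⟫ / ‖v‖ ^ 2
  have hexpand : ‖u - t • v‖ ^ 2 = ‖u‖ ^ 2 - 2 * t * ⟪u, v⟫ + t ^ 2 * ‖v‖ ^ 2 := by
    rw [norm_sub_sq_real, real_inner_smul_right, norm_smul, mul_pow, Real.norm_eq_abs, sq_abs]
    ring
  have htv : t * ‖v‖ ^ 2 = ⟪u, v⟫ := div_mul_cancel₀ _ hv2.ne'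
  have hsq : ‖u‖ ^ 2 ≤ ‖u - t • v‖ ^ 2 := pow_le_pow_left₀ (norm_nonneg u) (h t) 2
  have : ⟪u, v⟫ ^ 2 ≤ 0 := by nlinarith
  exact pow_eq_zero_iff two_ne_zero |>.mp (le_antisymm this (sq_nonneg _))

theorem norm_sub_sq_eq_of_forall_norm_sub_le {L : Set E} {x p z : E}
    (hmin : ∀ y ∈ L, ‖x - p‖ ≤ ‖x - y‖) (hline : ∀ t : ℝ, p + t • (z - p) ∈ L) :
    ‖x - z‖ ^ 2 = ‖x - p‖ ^ 2 + ‖z - p‖ ^ 2 := by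
  have horth : ⟪x - p, z - p⟫ = 0 :=
    real_inner_eq_zero_of_forall_norm_le_norm_sub_smul fun t => by
      simpa only [sub_sub] using hmin _ (hline t)
  rw [show x - z = (x - p) - (z - p) by abel, norm_sub_sq_real, horth]
  ring

theorem isClosed_setOf_inner_eq_and_inner_le {ι : Type*} (a : ι → E) (b : ι → ℝ)
    (P Q : ι → Prop) :
    IsClosed {x | (∀ i, P i → ⟪a i, x⟫ = b i) ∧ (∀ i, Q i → ⟪a i, x⟫ ≤ b i)} := by
  simp only [Set.ofPred_and, Set.ofPred_forall]
  exact (isClosed_iInter fun i => isClosed_iInter fun _ =>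
      isClosed_eq (continuous_const.inner continuous_id) continuous_const).inter
    (isClosed_iInter fun i => isClosed_iInter fun _ =>
      isClosed_le (continuous_const.inner continuous_id) continuous_const)

theorem infDist_sq_add_inv_mul_sum_residual_sq_le {ι : Type*} {a : ι → E} {b : ι → ℝ}
    {τ : Finset ι} {β : ℝ} (hβ : ∀ w : E, ∑ i ∈ τ, ⟪a i, w⟫ ^ 2 ≤ β * ‖w‖ ^ 2)
    {S : Set E} {x p z : E} (hp : ∀ i ∈ τ, ⟪a i, p⟫ = b i)
    (hmin : ∀ y, (∀ i ∈ τ, ⟪a i, y⟫ = b i) → ‖x - p‖ ≤ ‖x - y‖)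
    (hz : ∀ i ∈ τ, ⟪a i, z⟫ = b i) (hzS : z ∈ S) :
    Metric.infDist p S ^ 2 + (1 / β) * ∑ i ∈ τ, (⟪a i, x⟫ - b i) ^ 2 ≤ dist x z ^ 2 := by
  have hpyth : ‖x - z‖ ^ 2 = ‖x - p‖ ^ 2 + ‖z - p‖ ^ 2 :=
    norm_sub_sq_eq_of_forall_norm_sub_le (L := {y | ∀ i ∈ τ, ⟪a i, y⟫ = b i}) hmin
      fun t i hi => by rw [inner_add_right, real_inner_smul_right, inner_sub_right, hz i hi,
        hp i hi, sub_self, mul_zero, add_zero]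
  have hresidual : (1 / β) * ∑ i ∈ τ, (⟪a i, x⟫ - b i) ^ 2 ≤ ‖x - p‖ ^ 2 := by
    rw [one_div_mul_eq_div]
    refine div_le_of_le_mul_of_nonneg (by positivity) (by positivity) ?_
    calc ∑ i ∈ τ, (⟪a i, x⟫ - b i) ^ 2 = ∑ i ∈ τ, ⟪a i, x - p⟫ ^ 2 :=
          Finset.sum_congr rfl fun i hi => by rw [inner_sub_right, hp i hi]
      _ ≤ β * ‖x - p‖ ^ 2 := hβ _
  have hdist : Metric.infDist p S ≤ ‖z - p‖ := by
    simpa only [dist_eq_norm'] using Metric.infDist_le_dist_of_mem hzS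
  have := pow_le_pow_left₀ Metric.infDist_nonneg hdist 2
  rw [dist_eq_norm]
  linarith

end InnerProductSpace

namespace IsRowPaving

variable {n d m : ℕ} {a : Fin n → EuclideanSpace ℝ (Fin d)} {I : Finset (Fin n)} {β : ℝ}
  {T : Fin m → Finset (Fin n)}

theorem mem_of_mem (hT : IsRowPaving a I m β T) {k : Fin m} {i : Fin n} (hi : i ∈ T k) :
    i ∈ I :=
  hT.2.2.1 ▸ Finset.mem_biUnion.2 ⟨k, Finset.mem_univ k, hi⟩

theorem sum_eq {M : Type*} [AddCommMonoid M] (hT : IsRowPaving a I m β T) (f : Fin n → M) :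
    ∑ i ∈ I, f i = ∑ k, ∑ i ∈ T k, f i := by
  rw [← hT.2.2.1, Finset.sum_biUnion fun k _ l _ hkl => hT.2.1 k l hkl]

end IsRowPaving

theorem block_projection_average_progress_general
    {ne ni d m : ℕ}
    (a : Fin (ne + ni) → EuclideanSpace ℝ (Fin d)) (b : Fin (ne + ni) → ℝ)
    (S : Set (EuclideanSpace ℝ (Fin d)))
    (hSdef : S = {x | (∀ i : Fin (ne + ni), (i : ℕ) < ne → ⟪a i, x⟫ = b i) ∧
                      (∀ i : Fin (ne + ni), ne ≤ (i : ℕ) → ⟪a i, x⟫ ≤ b i)})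
    (hSne : S.Nonempty)
    (β : ℝ)
    (T : Fin m → Finset (Fin (ne + ni)))
    (hT : IsRowPaving a (Finset.univ.filter fun i : Fin (ne + ni) => (i : ℕ) < ne) m β T)
    (x : EuclideanSpace ℝ (Fin d))
    -- xτ k is the orthogonal projection of x onto {y : A_(T k) y = b_(T k)}
    (xτ : Fin m → EuclideanSpace ℝ (Fin d))
    (hproj : ∀ k : Fin m,
      (∀ i ∈ T k, ⟪a i, xτ k⟫ = b i) ∧
      (∀ y : EuclideanSpace ℝ (Fin d), (∀ i ∈ T k, ⟪a i, y⟫ = b i) → ‖x - xτ k‖ ≤ ‖x - y‖)) :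
    (1 / m) * ∑ k, Metric.infDist (xτ k) S ^ 2 ≤
      Metric.infDist x S ^ 2 -
        (1 / (β * m)) * ∑ i ∈ (Finset.univ.filter fun i : Fin (ne + ni) => (i : ℕ) < ne),
          (⟪a i, x⟫ - b i) ^ 2 := by
  have hSclosed : IsClosed S := hSdef ▸ isClosed_setOf_inner_eq_and_inner_le a b _ _
  obtain ⟨z, hzS, hxz⟩ := hSclosed.exists_infDist_eq_dist hSne x
  have hz : ∀ k, ∀ i ∈ T k, ⟪a i, z⟫ = b i := fun k i hi =>
    (hSdef ▸ hzS).1 i (Finset.mem_filter.1 (hT.mem_of_mem hi)).2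
  have hblock k := infDist_sq_add_inv_mul_sum_residual_sq_le (hT.2.2.2 k) (hproj k).1
    (hproj k).2 (hz k) hzS
  have htotal := Finset.sum_le_sum fun k (_ : k ∈ Finset.univ) => hblock k
  rw [Finset.sum_add_distrib, ← Finset.mul_sum, ← hT.sum_eq, Finset.sum_const, Finset.card_univ,
    Fintype.card_fin, nsmul_eq_mul] at htotal
  have haverage := div_le_of_le_mul₀ m.cast_nonneg (sq_nonneg _) (htotal.trans_eq (mul_comm _ _))
  rw [hxz, le_sub_iff_add_le]
  exact Eq.trans_le (by ring) haverage

/-- **Lemma (expected progress of a block equality projection).**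
For a standardized system with nonempty feasible set `S` and an `(m, β)` row paving `T` of
the equality submatrix `A_=`, if for each block `τ = T k` the point `x_τ` is the orthogonal
projection of `x` onto the affine subspace `{y : A_τ y = b_τ}`, then
`(1/m) Σ_τ d(x_τ, S)² ≤ d(x, S)² − (1/(βm)) ‖A_= x − b_=‖²`. -/
theorem block_projection_average_progress
    {ne ni d m : ℕ} (hm : 0 < m)
    (a : Fin (ne + ni) → EuclideanSpace ℝ (Fin d)) (b : Fin (ne + ni) → ℝ)
    (ha : ∀ i, ‖a i‖ = 1)
    (S : Set (EuclideanSpace ℝ (Fin d)))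
    (hSdef : S = {x | (∀ i : Fin (ne + ni), (i : ℕ) < ne → ⟪a i, x⟫ = b i) ∧
                      (∀ i : Fin (ne + ni), ne ≤ (i : ℕ) → ⟪a i, x⟫ ≤ b i)})
    (hSne : S.Nonempty)
    (β : ℝ) (hβ : 0 < β)
    (T : Fin m → Finset (Fin (ne + ni)))
    (hT : IsRowPaving a (Finset.univ.filter fun i : Fin (ne + ni) => (i : ℕ) < ne) m β T)
    (x : EuclideanSpace ℝ (Fin d))
    -- xτ k is the orthogonal projection of x onto {y : A_(T k) y = b_(T k)}
    (xτ : Fin m → EuclideanSpace ℝ (Fin d))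
    (hproj : ∀ k : Fin m,
      (∀ i ∈ T k, ⟪a i, xτ k⟫ = b i) ∧
      (∀ y : EuclideanSpace ℝ (Fin d), (∀ i ∈ T k, ⟪a i, y⟫ = b i) → ‖x - xτ k‖ ≤ ‖x - y‖)) :
    (1 / m) * ∑ k, Metric.infDist (xτ k) S ^ 2 ≤
      Metric.infDist x S ^ 2 -
        (1 / (β * m)) * ∑ i ∈ (Finset.univ.filter fun i : Fin (ne + ni) => (i : ℕ) < ne),
          (⟪a i, x⟫ - b i) ^ 2 :=
  block_projection_average_progress_general a b S hSdef hSne β T hT x xτ hproj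
end
end

section
/- Suppose the system consists only of equalities (n_i = 0), A = A_= has full column rank, and Ax⋆ = b for some x⋆ ∈ ℝ^d (so S = {x⋆}). Let T be an (m, β) row paving of A, and let (x_j) be the iterates from an arbitrary x_0 obtained by choosing at each iteration a block τ uniformly at random from T (independently across iterations) and setting x_j equal to the orthogonal projection of x_{j−1} onto {x : A_τ x = b_τ}. Then for every j ≥ 1, E[‖x_j − x⋆‖²] ≤ (1 − σ_min²(A)/(βm))^j · ‖x_0 − x⋆‖², where σ_min(A) is the smallest singular value of A. -/
open scoped RealInnerProductSpace BigOperators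

noncomputable section

/-- The random iterates of a Kaczmarz-type algorithm: given the outcomes `ω : Fin j → C` of
`j` independent random choices and an update map `step`, `kacIter step x0 j ω` is the `j`-th
iterate started from `x0`. -/
def kacIter {C V : Type*} (step : C → V → V) (x0 : V) : (j : ℕ) → (Fin j → C) → V
  | 0, _ => x0
  | j + 1, ω => step (ω (Fin.last j)) (kacIter step x0 j fun k => ω k.castSucc)

/-!
The projection `x₊` of `x` onto the solutions of a block `τ` is a nearest point of a convex set
containing `x⋆`, so `‖x₊ - x⋆‖² ≤ ‖x - x⋆‖² - ‖x - x₊‖²`, and the paving bound gives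
`β ‖x - x₊‖² ≥ ‖A_τ (x - x₊)‖² = ‖A_τ (x - x⋆)‖²`. Since the blocks partition the rows, averaging
over them yields `𝔼 ‖x₊ - x⋆‖² ≤ ‖x - x⋆‖² - ‖A (x - x⋆)‖² / (β m)
≤ (1 - σ_min² / (β m)) ‖x - x⋆‖²`, and independence of the choices lets this contraction iterate.
-/

section Iterates

variable {C V : Type*}

theorem kacIter_succ (step : C → V → V) (x0 : V) {j : ℕ} (ω : Fin (j + 1) → C) :
    kacIter step x0 (j + 1) ω = step (ω (Fin.last j)) (kacIter step x0 j (Fin.init ω)) :=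
  rfl

theorem sum_prod_mul_kacIter_le [Fintype C] (p : C → ℝ) (hp : ∀ k, 0 ≤ p k)
    (step : C → V → V) (f : V → ℝ) {q : ℝ} (hq : 0 ≤ q)
    (hstep : ∀ x, ∑ k, p k * f (step k x) ≤ q * f x) (x0 : V) (j : ℕ) :
    ∑ ω : Fin j → C, (∏ i, p (ω i)) * f (kacIter step x0 j ω) ≤ q ^ j * f x0 := by
  induction j with
  | zero => simp [kacIter]
  | succ j ih =>
    calc ∑ ω : Fin (j + 1) → C, (∏ i, p (ω i)) * f (kacIter step x0 (j + 1) ω)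
        = ∑ ω : Fin j → C, (∏ i, p (ω i)) * ∑ k, p k * f (step k (kacIter step x0 j ω)) := by
          rw [← (Fin.snocEquiv fun _ => C).sum_comp, Fintype.sum_prod_type_right]
          refine Finset.sum_congr rfl fun ω _ => ?_
          simp only [Fin.snocEquiv, Equiv.coe_fn_mk, Fin.prod_univ_castSucc, Fin.snoc_castSucc,
            Fin.snoc_last, kacIter_succ, Fin.init_snoc, mul_assoc, Finset.mul_sum]
      _ ≤ ∑ ω : Fin j → C, (∏ i, p (ω i)) * (q * f (kacIter step x0 j ω)) :=
          Finset.sum_le_sum fun ω _ =>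
            mul_le_mul_of_nonneg_left (hstep _) (Finset.prod_nonneg fun i _ => hp (ω i))
      _ = q * ∑ ω : Fin j → C, (∏ i, p (ω i)) * f (kacIter step x0 j ω) := by
          rw [Finset.mul_sum]
          exact Finset.sum_congr rfl fun _ _ => by ring
      _ ≤ q ^ (j + 1) * f x0 := by
          rw [pow_succ', mul_assoc]
          exact mul_le_mul_of_nonneg_left ih hq

end Iterates

section Projection

variable {E : Type*} [NormedAddCommGroup E] [InnerProductSpace ℝ E]

theorem sq_norm_sub_add_sq_norm_sub_le_of_forall_norm_sub_le {K : Set E} (hK : Convex ℝ K)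
    {x p y : E} (hp : p ∈ K) (hmin : ∀ z ∈ K, ‖x - p‖ ≤ ‖x - z‖) (hy : y ∈ K) :
    ‖x - p‖ ^ 2 + ‖p - y‖ ^ 2 ≤ ‖x - y‖ ^ 2 := by
  have : Nonempty K := ⟨⟨p, hp⟩⟩
  have hinf : ‖x - p‖ = ⨅ z : K, ‖x - z‖ :=
    le_antisymm (le_ciInf fun z => hmin z z.2)
      (ciInf_le ⟨0, Set.forall_mem_range.2 fun z : K => norm_nonneg (x - z)⟩ ⟨p, hp⟩)
  have hobtuse : ⟪x - p, y - p⟫ ≤ 0 := (norm_eq_iInf_iff_real_inner_le_zero hK hp).1 hinf y hy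
  rw [show x - y = (x - p) - (y - p) by abel, norm_sub_sq_real (x - p),
    norm_sub_rev p y]
  linarith

variable {ι : Type*}

def blockSolutionSet (a : ι → E) (b : ι → ℝ) (τ : Finset ι) : Set E :=
  {y | ∀ i ∈ τ, ⟪a i, y⟫ = b i}

theorem convex_blockSolutionSet (a : ι → E) (b : ι → ℝ) (τ : Finset ι) :
    Convex ℝ (blockSolutionSet a b τ) := by
  intro y hy z hz s t _ _ hst i hi
  rw [inner_add_right, real_inner_smul_right, real_inner_smul_right, hy i hi, hz i hi,
    ← add_mul, hst, one_mul]

theorem sum_sq_inner_add_mul_sq_norm_le {a : ι → E} {b : ι → ℝ} {τ : Finset ι} {β : ℝ}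
    (hβ : 0 ≤ β) (hτ : ∀ x, ∑ i ∈ τ, ⟪a i, x⟫ ^ 2 ≤ β * ‖x‖ ^ 2) {x p xstar : E}
    (hp : p ∈ blockSolutionSet a b τ)
    (hmin : ∀ y ∈ blockSolutionSet a b τ, ‖x - p‖ ≤ ‖x - y‖)
    (hxstar : xstar ∈ blockSolutionSet a b τ) :
    ∑ i ∈ τ, ⟪a i, x - xstar⟫ ^ 2 + β * ‖p - xstar‖ ^ 2 ≤ β * ‖x - xstar‖ ^ 2 := by
  have hresidual : ∑ i ∈ τ, ⟪a i, x - xstar⟫ ^ 2 ≤ β * ‖x - p‖ ^ 2 := by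
    calc ∑ i ∈ τ, ⟪a i, x - xstar⟫ ^ 2 = ∑ i ∈ τ, ⟪a i, x - p⟫ ^ 2 :=
          Finset.sum_congr rfl fun i hi => by
            rw [inner_sub_right, inner_sub_right, hp i hi, hxstar i hi]
      _ ≤ β * ‖x - p‖ ^ 2 := hτ _
  have hpyth := sq_norm_sub_add_sq_norm_sub_le_of_forall_norm_sub_le
    (convex_blockSolutionSet a b τ) hp hmin hxstar
  nlinarith

end Projection

theorem sq_le_of_isGreatest_sq_mul_sq_norm_le {F : Type*} [NormedAddCommGroup F] {Q : F → ℝ}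
    {σ c : ℝ}
    (hσ : IsGreatest {t : ℝ | 0 ≤ t ∧ ∀ x : F, t ^ 2 * ‖x‖ ^ 2 ≤ Q x} σ)
    (hQ : ∀ x, Q x ≤ c * ‖x‖ ^ 2) : σ ^ 2 ≤ c := by
  rcases subsingleton_or_nontrivial F with hF | hF
  · -- on the zero space every `t ≥ 0` qualifies, so there is no greatest one
    have hmem : σ + 1 ∈ {t : ℝ | 0 ≤ t ∧ ∀ x : F, t ^ 2 * ‖x‖ ^ 2 ≤ Q x} :=
      ⟨by linarith [hσ.1.1], fun x => by simpa [Subsingleton.elim x 0] using hσ.1.2 x⟩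
    linarith [hσ.2 hmem]
  · obtain ⟨x, hx⟩ := exists_ne (0 : F)
    exact le_of_mul_le_mul_right ((hσ.1.2 x).trans (hQ x)) (by positivity)

namespace IsRowPaving

variable {n d m : ℕ} {a : Fin n → EuclideanSpace ℝ (Fin d)} {I : Finset (Fin n)} {β : ℝ}
  {T : Fin m → Finset (Fin n)}

theorem sum_sum_blocks (hT : IsRowPaving a I m β T) (g : Fin n → ℝ) :
    ∑ k, ∑ i ∈ T k, g i = ∑ i ∈ I, g i := by
  rw [← hT.2.2.1, Finset.sum_biUnion fun k _ l _ hkl => hT.2.1 k l hkl]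

theorem sum_sq_inner_le (hT : IsRowPaving a I m β T) (x : EuclideanSpace ℝ (Fin d)) :
    ∑ i ∈ I, ⟪a i, x⟫ ^ 2 ≤ β * m * ‖x‖ ^ 2 := by
  calc ∑ i ∈ I, ⟪a i, x⟫ ^ 2 = ∑ k, ∑ i ∈ T k, ⟪a i, x⟫ ^ 2 := (hT.sum_sum_blocks _).symm
    _ ≤ ∑ _k : Fin m, β * ‖x‖ ^ 2 := Finset.sum_le_sum fun k _ => hT.2.2.2 k x
    _ = β * m * ‖x‖ ^ 2 := by rw [Fin.sum_const, nsmul_eq_mul]; ring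

theorem mul_sum_sq_norm_step_sub_le {b : Fin n → ℝ} (hT : IsRowPaving a Finset.univ m β T)
    (hβ : 0 ≤ β) {σ : ℝ} (hσ : ∀ x, σ ^ 2 * ‖x‖ ^ 2 ≤ ∑ i, ⟪a i, x⟫ ^ 2)
    {xstar : EuclideanSpace ℝ (Fin d)} (hxstar : ∀ i, ⟪a i, xstar⟫ = b i)
    {step : Fin m → EuclideanSpace ℝ (Fin d) → EuclideanSpace ℝ (Fin d)}
    (hstep : ∀ k x, step k x ∈ blockSolutionSet a b (T k) ∧
      ∀ y ∈ blockSolutionSet a b (T k), ‖x - step k x‖ ≤ ‖x - y‖)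
    (x : EuclideanSpace ℝ (Fin d)) :
    β * ∑ k, ‖step k x - xstar‖ ^ 2 ≤ (β * m - σ ^ 2) * ‖x - xstar‖ ^ 2 := by
  have hblocks := Finset.sum_le_sum fun k (_ : k ∈ Finset.univ) =>
    sum_sq_inner_add_mul_sq_norm_le hβ (hT.2.2.2 k) (hstep k x).1 (hstep k x).2
      (fun i _ => hxstar i)
  rw [Finset.sum_add_distrib, hT.sum_sum_blocks, ← Finset.mul_sum] at hblocks
  have hconst : ∑ _k : Fin m, β * ‖x - xstar‖ ^ 2 = β * m * ‖x - xstar‖ ^ 2 := by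
    rw [Fin.sum_const, nsmul_eq_mul]; ring
  linarith [hσ (x - xstar)]

end IsRowPaving

theorem block_kaczmarz_equalities_convergence_general
    {n d m : ℕ} (hm : 0 < m)
    (a : Fin n → EuclideanSpace ℝ (Fin d)) (b : Fin n → ℝ)
    -- the system is consistent, with solution x⋆
    (xstar : EuclideanSpace ℝ (Fin d)) (hxstar : ∀ i, ⟪a i, xstar⟫ = b i)
    -- σmin is the smallest singular value of A
    (σmin : ℝ)
    (hσmin : IsGreatest {t : ℝ | 0 ≤ t ∧ ∀ x : EuclideanSpace ℝ (Fin d),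
      t ^ 2 * ‖x‖ ^ 2 ≤ ∑ i, ⟪a i, x⟫ ^ 2} σmin)
    -- an (m, β) row paving of A (of all of its rows)
    (β : ℝ) (hβ : 0 < β)
    (T : Fin m → Finset (Fin n))
    (hT : IsRowPaving a Finset.univ m β T)
    -- the one-step update: orthogonal projection onto {x : A_τ x = b_τ}
    (step : Fin m → EuclideanSpace ℝ (Fin d) → EuclideanSpace ℝ (Fin d))
    (hstep : ∀ (k : Fin m) (x : EuclideanSpace ℝ (Fin d)),
      (∀ i ∈ T k, ⟪a i, step k x⟫ = b i) ∧
      (∀ y : EuclideanSpace ℝ (Fin d), (∀ i ∈ T k, ⟪a i, y⟫ = b i) →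
        ‖x - step k x‖ ≤ ‖x - y‖))
    (x0 : EuclideanSpace ℝ (Fin d)) (j : ℕ) :
    -- 𝔼[‖x_j − x⋆‖²], the block at each iteration being uniform on the m blocks:
    ∑ ω : Fin j → Fin m, (1 / (m : ℝ)) ^ j * ‖kacIter step x0 j ω - xstar‖ ^ 2 ≤
      (1 - σmin ^ 2 / (β * m)) ^ j * ‖x0 - xstar‖ ^ 2 := by
  have hm' : (0 : ℝ) < m := Nat.cast_pos.2 hm
  have hσβ : σmin ^ 2 ≤ β * m := sq_le_of_isGreatest_sq_mul_sq_norm_le hσmin hT.sum_sq_inner_le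
  have hq : 0 ≤ 1 - σmin ^ 2 / (β * m) := sub_nonneg.2 (div_le_one_of_le₀ hσβ (by positivity))
  have hcontract : ∀ x, ∑ k : Fin m, 1 / (m : ℝ) * ‖step k x - xstar‖ ^ 2 ≤
      (1 - σmin ^ 2 / (β * m)) * ‖x - xstar‖ ^ 2 := by
    intro x
    have h := hT.mul_sum_sq_norm_step_sub_le hβ.le hσmin.1.2 hxstar hstep x
    rw [← Finset.mul_sum]
    calc 1 / (m : ℝ) * ∑ k, ‖step k x - xstar‖ ^ 2
        = (β * ∑ k, ‖step k x - xstar‖ ^ 2) / (β * m) := by field_simp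
      _ ≤ (β * m - σmin ^ 2) * ‖x - xstar‖ ^ 2 / (β * m) := by gcongr
      _ = (1 - σmin ^ 2 / (β * m)) * ‖x - xstar‖ ^ 2 := by field_simp
  simpa using sum_prod_mul_kacIter_le (fun _ => 1 / (m : ℝ)) (fun _ => by positivity) step
    (fun x => ‖x - xstar‖ ^ 2) hq hcontract x0 j

/-- **Theorem (randomized block Kaczmarz for consistent systems of equalities).**
Suppose the standardized system consists only of equalities: `A` has full column rank and
`A x⋆ = b`, so the solution set is `{x⋆}`.  Let `T` be an `(m, β)` row paving of `A`, and
let the iterates be obtained from an arbitrary `x₀` by choosing at each iteration a block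
`τ` uniformly at random from `T` (independently across iterations) and projecting
orthogonally onto `{x : A_τ x = b_τ}`.  Then for every `j ≥ 1`,
`𝔼[‖x_j − x⋆‖²] ≤ (1 − σ_min²(A)/(βm))^j ‖x₀ − x⋆‖²`, where `σ_min(A)` is the smallest
singular value of `A` (characterized as the greatest `t ≥ 0` with
`t² ‖x‖² ≤ ‖A x‖²` for all `x`). -/
theorem block_kaczmarz_equalities_convergence
    {n d m : ℕ} (hm : 0 < m)
    (a : Fin n → EuclideanSpace ℝ (Fin d)) (b : Fin n → ℝ)
    (ha : ∀ i, ‖a i‖ = 1)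
    -- A has full column rank
    (hrank : ∀ x : EuclideanSpace ℝ (Fin d), (∀ i, ⟪a i, x⟫ = 0) → x = 0)
    -- the system is consistent, with solution x⋆
    (xstar : EuclideanSpace ℝ (Fin d)) (hxstar : ∀ i, ⟪a i, xstar⟫ = b i)
    -- σmin is the smallest singular value of A
    (σmin : ℝ)
    (hσmin : IsGreatest {t : ℝ | 0 ≤ t ∧ ∀ x : EuclideanSpace ℝ (Fin d),
      t ^ 2 * ‖x‖ ^ 2 ≤ ∑ i, ⟪a i, x⟫ ^ 2} σmin)
    -- an (m, β) row paving of A (of all of its rows)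
    (β : ℝ) (hβ : 0 < β)
    (T : Fin m → Finset (Fin n))
    (hT : IsRowPaving a Finset.univ m β T)
    -- the one-step update: orthogonal projection onto {x : A_τ x = b_τ}
    (step : Fin m → EuclideanSpace ℝ (Fin d) → EuclideanSpace ℝ (Fin d))
    (hstep : ∀ (k : Fin m) (x : EuclideanSpace ℝ (Fin d)),
      (∀ i ∈ T k, ⟪a i, step k x⟫ = b i) ∧
      (∀ y : EuclideanSpace ℝ (Fin d), (∀ i ∈ T k, ⟪a i, y⟫ = b i) →
        ‖x - step k x‖ ≤ ‖x - y‖))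
    (x0 : EuclideanSpace ℝ (Fin d)) (j : ℕ) (hj : 1 ≤ j) :
    -- 𝔼[‖x_j − x⋆‖²], the block at each iteration being uniform on the m blocks:
    ∑ ω : Fin j → Fin m, (1 / (m : ℝ)) ^ j * ‖kacIter step x0 j ω - xstar‖ ^ 2 ≤
      (1 - σmin ^ 2 / (β * m)) ^ j * ‖x0 - xstar‖ ^ 2 :=
  block_kaczmarz_equalities_convergence_general hm a b xstar hxstar σmin hσmin β hβ T hT step hstep
    x0 j
end
end
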